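/- arXiv:2107.02011 — 3 statements merged into one kernel-verified Lean document; each statement's English description precedes it below -/
import Mathlib

section
/- Suppose (α_j) is a sequence of nonnegative reals bounded by A with α_j → 0, (q_j) is non-increasing nonnegative with q_0 > 0 and Q_n := ∑_{j=0}^{n−1} q_j → ∞. Then (1/Q_n) ∑_{j=0}^{n−2} (q_j − q_{j+1})·j·α_j → 0 as n → ∞. -/
open Filter

lemma abel_weight_bound (q : ℕ → ℝ) (hq : ∀ j, 0 ≤ q j) (hmono : Antitone q) :
    ∀ m, (∑ j ∈ Finset.range m, (q j - q (j + 1)) * (j : ℝ)) + m * q m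
      ≤ ∑ j ∈ Finset.range (m + 1), q j := by
  intro m
  induction m with
  | zero => simpa using hq 0
  | succ m ih =>
      rw [Finset.sum_range_succ, Finset.sum_range_succ (f := q) (n := m + 1)]
      rw [Finset.sum_range_succ (f := q) (n := m)] at ih
      have hx : ∑ x ∈ Finset.range (m + 1), q x = ∑ x ∈ Finset.range m, q x + q m :=
        Finset.sum_range_succ q m
      push_cast
      have expand : (q m - q (m + 1)) * (m : ℝ) + ((m : ℝ) + 1) * q (m + 1)
          = (m : ℝ) * q m + q (m + 1) := by ring
      linarith [ih, hx, expand]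

/-- If `(α_j)` is nonnegative, bounded and tends to `0`, and `(q_j)` is non-increasing and
nonnegative with `q_0 > 0` and `Q_n → ∞`, then
`(1/Q_n) ∑_{j=0}^{n−2} (q_j − q_{j+1}) j α_j → 0`. -/
theorem nonincreasing_weighted_average_tendsto_zero (q α : ℕ → ℝ)
    (hq : ∀ j, 0 ≤ q j) (hmono : Antitone q) (h0 : 0 < q 0)
    (hQ : Tendsto (fun n => ∑ j ∈ Finset.range n, q j) atTop atTop)
    (hα : ∀ j, 0 ≤ α j) (A : ℝ) (hA : ∀ j, α j ≤ A)
    (hlim : Tendsto α atTop (nhds 0)) :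
    Tendsto (fun n => (1 / ∑ j ∈ Finset.range n, q j) *
        ∑ j ∈ Finset.range (n - 1), (q j - q (j + 1)) * (j : ℝ) * α j)
      atTop (nhds 0) := by
  rw [Metric.tendsto_atTop]
  intro ε hε
  -- term nonnegativity
  have hterm : ∀ j, 0 ≤ (q j - q (j + 1)) * (j : ℝ) * α j := by
    intro j
    have h1 : 0 ≤ q j - q (j + 1) := by
      have := hmono (Nat.le_succ j); linarith
    exact mul_nonneg (mul_nonneg h1 (Nat.cast_nonneg j)) (hα j)
  have hwt : ∀ j, 0 ≤ (q j - q (j + 1)) * (j : ℝ) := by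
    intro j
    have h1 : 0 ≤ q j - q (j + 1) := by
      have := hmono (Nat.le_succ j); linarith
    exact mul_nonneg h1 (Nat.cast_nonneg j)
  -- N1 : tail of α small
  obtain ⟨N1, hN1⟩ : ∃ N1, ∀ j ≥ N1, α j ≤ ε / 2 := by
    have := (Metric.tendsto_atTop.mp hlim) (ε / 2) (by linarith)
    obtain ⟨N1, hN1⟩ := this
    exact ⟨N1, fun j hj => by
      have := hN1 j hj
      rw [Real.dist_eq, sub_zero] at this
      have := abs_lt.mp this
      linarith [this.2]⟩
  set C := ∑ j ∈ Finset.range N1, (q j - q (j + 1)) * (j : ℝ) * α j with hC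
  have hC0 : 0 ≤ C := Finset.sum_nonneg fun j _ => hterm j
  -- N2 : Q_n large
  obtain ⟨N2, hN2⟩ := (Filter.eventually_atTop.mp
    (hQ.eventually_ge_atTop (2 * C / ε + 1)))
  refine ⟨max N2 (N1 + 1), fun n hn => ?_⟩
  have hn2 : n ≥ N2 := le_trans (le_max_left _ _) hn
  have hn1 : N1 ≤ n - 1 := by
    have : N1 + 1 ≤ n := le_trans (le_max_right _ _) hn
    omega
  set S := ∑ j ∈ Finset.range n, q j with hS
  have hSbig : 2 * C / ε + 1 ≤ S := hN2 n hn2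
  have hSpos : 0 < S := by
    have : 0 ≤ 2 * C / ε := by positivity
    linarith
  set T := ∑ j ∈ Finset.range (n - 1), (q j - q (j + 1)) * (j : ℝ) * α j with hT
  have hT0 : 0 ≤ T := Finset.sum_nonneg fun j _ => hterm j
  -- split T
  have hsplit : T = C + ∑ j ∈ Finset.Ico N1 (n - 1), (q j - q (j + 1)) * (j : ℝ) * α j := by
    rw [hT, hC, Finset.range_eq_Ico, Finset.range_eq_Ico]
    exact (Finset.sum_Ico_consecutive (fun j => (q j - q (j + 1)) * (j : ℝ) * α j) (Nat.zero_le N1) hn1).symm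
  -- bound tail sum
  have htail : ∑ j ∈ Finset.Ico N1 (n - 1), (q j - q (j + 1)) * (j : ℝ) * α j
      ≤ (ε / 2) * S := by
    have step1 : ∑ j ∈ Finset.Ico N1 (n - 1), (q j - q (j + 1)) * (j : ℝ) * α j
        ≤ ∑ j ∈ Finset.Ico N1 (n - 1), (q j - q (j + 1)) * (j : ℝ) * (ε / 2) := by
      refine Finset.sum_le_sum fun j hj => ?_
      have hjN1 : N1 ≤ j := (Finset.mem_Ico.mp hj).1
      exact mul_le_mul_of_nonneg_left (hN1 j hjN1) (hwt j)
    have step2 : ∑ j ∈ Finset.Ico N1 (n - 1), (q j - q (j + 1)) * (j : ℝ) * (ε / 2)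
        ≤ (ε / 2) * ∑ j ∈ Finset.range (n - 1), (q j - q (j + 1)) * (j : ℝ) := by
      rw [Finset.mul_sum]
      have hsub : Finset.Ico N1 (n - 1) ⊆ Finset.range (n - 1) := by
        rw [Finset.range_eq_Ico]; exact Finset.Ico_subset_Ico (Nat.zero_le _) le_rfl
      calc ∑ j ∈ Finset.Ico N1 (n - 1), (q j - q (j + 1)) * (j : ℝ) * (ε / 2)
          ≤ ∑ j ∈ Finset.range (n - 1), (q j - q (j + 1)) * (j : ℝ) * (ε / 2) :=
            Finset.sum_le_sum_of_subset_of_nonneg hsub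
              (fun j _ _ => mul_nonneg (hwt j) (le_of_lt (half_pos hε)))
        _ = ∑ j ∈ Finset.range (n - 1), (ε / 2) * ((q j - q (j + 1)) * (j : ℝ)) := by
            refine Finset.sum_congr rfl fun j _ => by ring
    have step3 : ∑ j ∈ Finset.range (n - 1), (q j - q (j + 1)) * (j : ℝ) ≤ S := by
      have habel := abel_weight_bound q hq hmono (n - 1)
      have hnn : (0 : ℝ) ≤ (n - 1 : ℕ) * q (n - 1) := mul_nonneg (Nat.cast_nonneg _) (hq _)
      have hn' : (n - 1) + 1 = n := by omega
      rw [hn'] at habel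
      linarith
    calc _ ≤ _ := step1
      _ ≤ (ε / 2) * ∑ j ∈ Finset.range (n - 1), (q j - q (j + 1)) * (j : ℝ) := step2
      _ ≤ (ε / 2) * S := by
          exact mul_le_mul_of_nonneg_left step3 (by linarith)
  have hTle : T ≤ C + (ε / 2) * S := by rw [hsplit]; linarith
  -- conclude
  have hεS : T < ε * S := by
    have h1 : 2 * C / ε + 1 ≤ S := hSbig
    have h2 : 2 * C ≤ ε * (S - 1) := by
      have := (div_le_iff₀ hε).mp (by linarith : 2 * C / ε ≤ S - 1)
      linarith [this]
    nlinarith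
  have hfin : (1 / S) * T < ε := by
    rw [div_mul_eq_mul_div, one_mul, div_lt_iff₀ hSpos]
    linarith
  have hfpos : 0 ≤ (1 / S) * T := by positivity
  rw [Real.dist_eq, sub_zero, abs_of_nonneg hfpos]
  exact hfin
end

section
/- Suppose (q_j) is non-decreasing nonnegative with q_{n−1}·(n−1)/Q_n bounded and Q_n → ∞, and (α_j) is nonnegative bounded with α_j → 0. Then (1/Q_n) ∑_{j=1}^{n−2} (q_{j+1} − q_j)·j·α_j → 0 as n → ∞. -/
open Filter

/-- If `(q_j)` is non-decreasing and nonnegative with `q_0 > 0`, `Q_n → ∞` and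
`q_{n−1}(n−1)/Q_n` bounded, and `(α_j)` is nonnegative, bounded and tends to `0`, then
`(1/Q_n) ∑_{j=1}^{n−2} (q_{j+1} − q_j) j α_j → 0`. -/
theorem nondecreasing_weighted_average_tendsto_zero (q α : ℕ → ℝ)
    (hq : ∀ j, 0 ≤ q j) (hmono : Monotone q) (h0 : 0 < q 0)
    (hQ : Tendsto (fun n => ∑ j ∈ Finset.range n, q j) atTop atTop)
    (B : ℝ) (hB : ∀ n : ℕ, 1 ≤ n →
      q (n - 1) * ((n : ℝ) - 1) / (∑ j ∈ Finset.range n, q j) ≤ B)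
    (hα : ∀ j, 0 ≤ α j) (A : ℝ) (hA : ∀ j, α j ≤ A)
    (hlim : Tendsto α atTop (nhds 0)) :
    Tendsto (fun n => (1 / ∑ j ∈ Finset.range n, q j) *
        ∑ j ∈ Finset.Icc 1 (n - 2), (q (j + 1) - q j) * (j : ℝ) * α j)
      atTop (nhds 0) := by
  have hB0 : 0 ≤ B := by
    have := hB 1 le_rfl
    simpa using this
  have hterm : ∀ j : ℕ, 0 ≤ (q (j + 1) - q j) * (j : ℝ) * α j := by
    intro j
    have h1 : 0 ≤ q (j + 1) - q j := sub_nonneg.mpr (hmono (Nat.le_succ j))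
    exact mul_nonneg (mul_nonneg h1 (Nat.cast_nonneg j)) (hα j)
  rw [Metric.tendsto_atTop]
  intro ε hε
  have hε' : 0 < ε / (2 * (B + 1)) := by positivity
  obtain ⟨N, hN⟩ := Metric.tendsto_atTop.mp hlim (ε / (2 * (B + 1))) hε'
  have hαN : ∀ j, N ≤ j → α j ≤ ε / (2 * (B + 1)) := by
    intro j hj
    have := hN j hj
    rw [Real.dist_eq, sub_zero, abs_of_nonneg (hα j)] at this
    exact this.le
  set C := ∑ j ∈ Finset.Icc 1 N, (q (j + 1) - q j) * (j : ℝ) * α j with hCdef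
  have hC0 : 0 ≤ C := Finset.sum_nonneg fun j _ => hterm j
  obtain ⟨M, hM⟩ := eventually_atTop.mp (tendsto_atTop.mp hQ (2 * C / ε + 1))
  refine ⟨max M (N + 3), fun n hn => ?_⟩
  have hnM : M ≤ n := le_trans (le_max_left _ _) hn
  have hnN : N + 3 ≤ n := le_trans (le_max_right _ _) hn
  set S := ∑ j ∈ Finset.range n, q j with hSdef
  have hSbig : 2 * C / ε + 1 ≤ S := hM n hnM
  have hSpos : 0 < S := lt_of_lt_of_le (by positivity) hSbig
  -- split the sum
  have hsplit : ∑ j ∈ Finset.Icc 1 (n - 2), (q (j + 1) - q j) * (j : ℝ) * α j ≤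
      C + ∑ j ∈ Finset.Icc (N + 1) (n - 2), (q (j + 1) - q j) * (j : ℝ) * α j := by
    have hsub : Finset.Icc 1 (n - 2) ⊆ Finset.Icc 1 N ∪ Finset.Icc (N + 1) (n - 2) := by
      intro j hj
      simp only [Finset.mem_Icc, Finset.mem_union] at *
      omega
    calc ∑ j ∈ Finset.Icc 1 (n - 2), (q (j + 1) - q j) * (j : ℝ) * α j
        ≤ ∑ j ∈ Finset.Icc 1 N ∪ Finset.Icc (N + 1) (n - 2),
            (q (j + 1) - q j) * (j : ℝ) * α j :=
          Finset.sum_le_sum_of_subset_of_nonneg hsub (fun j _ _ => hterm j)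
      _ ≤ C + ∑ j ∈ Finset.Icc (N + 1) (n - 2), (q (j + 1) - q j) * (j : ℝ) * α j := by
          rw [Finset.sum_union (by
            rw [Finset.disjoint_left]
            intro j hj hj'
            simp only [Finset.mem_Icc] at *
            omega)]
  -- tail bound
  have htail : ∑ j ∈ Finset.Icc (N + 1) (n - 2), (q (j + 1) - q j) * (j : ℝ) * α j ≤
      ε / (2 * (B + 1)) * (((n : ℝ) - 1) * q (n - 1)) := by
    have h1 : ∑ j ∈ Finset.Icc (N + 1) (n - 2), (q (j + 1) - q j) * (j : ℝ) * α j ≤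
        ∑ j ∈ Finset.Icc (N + 1) (n - 2),
          ε / (2 * (B + 1)) * (((n : ℝ) - 1) * (q (j + 1) - q j)) := by
      apply Finset.sum_le_sum
      intro j hj
      simp only [Finset.mem_Icc] at hj
      have hd : 0 ≤ q (j + 1) - q j := sub_nonneg.mpr (hmono (Nat.le_succ j))
      have hjn : (j : ℝ) ≤ (n : ℝ) - 1 := by
        have : j + 1 ≤ n := by omega
        have := Nat.cast_le (α := ℝ).mpr this
        push_cast at this
        linarith
      have hαj : α j ≤ ε / (2 * (B + 1)) := hαN j (by omega)
      calc (q (j + 1) - q j) * (j : ℝ) * α j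
          ≤ (q (j + 1) - q j) * ((n : ℝ) - 1) * (ε / (2 * (B + 1))) := by
            apply mul_le_mul
            · exact mul_le_mul_of_nonneg_left hjn hd
            · exact hαj
            · exact hα j
            · exact mul_nonneg hd (by linarith)
        _ = ε / (2 * (B + 1)) * (((n : ℝ) - 1) * (q (j + 1) - q j)) := by ring
    rw [← Finset.mul_sum, ← Finset.mul_sum] at h1
    refine h1.trans ?_
    have htel : ∑ j ∈ Finset.Icc (N + 1) (n - 2), (q (j + 1) - q j) ≤ q (n - 1) := by
      have hicc : Finset.Icc (N + 1) (n - 2) = Finset.Ico (N + 1) (n - 1) := by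
        rw [← Finset.Ico_add_one_right_eq_Icc]
        congr 1
        omega
      rw [hicc, Finset.sum_Ico_eq_sub _ (by omega : N + 1 ≤ n - 1)]
      have t1 : ∑ i ∈ Finset.range (n - 1), (q (i + 1) - q i) = q (n - 1) - q 0 :=
        Finset.sum_range_sub q (n - 1)
      have t2 : ∑ i ∈ Finset.range (N + 1), (q (i + 1) - q i) = q (N + 1) - q 0 :=
        Finset.sum_range_sub q (N + 1)
      rw [t1, t2]
      have : q 0 ≤ q (N + 1) := hmono (Nat.zero_le _)
      linarith [hq (N + 1)]
    have hn1 : (0:ℝ) ≤ (n : ℝ) - 1 := by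
      have : (1:ℝ) ≤ (n : ℝ) := by exact_mod_cast Nat.one_le_cast.mpr (by omega)
      linarith
    have := mul_le_mul_of_nonneg_left htel hn1
    nlinarith [hε'.le]
  -- (n-1) q(n-1) ≤ B * S
  have hBS : ((n : ℝ) - 1) * q (n - 1) ≤ B * S := by
    have := hB n (by omega)
    rw [div_le_iff₀ hSpos] at this
    linarith
  set T := ∑ j ∈ Finset.Icc 1 (n - 2), (q (j + 1) - q j) * (j : ℝ) * α j with hTdef
  have hT0 : 0 ≤ T := Finset.sum_nonneg fun j _ => hterm j
  have hTle : T ≤ C + ε / (2 * (B + 1)) * (B * S) := by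
    refine hsplit.trans ?_
    have h2 := htail.trans (mul_le_mul_of_nonneg_left hBS hε'.le)
    linarith
  have hf0 : 0 ≤ 1 / S * T := by positivity
  rw [Real.dist_eq, sub_zero, abs_of_nonneg hf0]
  have key : 1 / S * T ≤ C / S + ε / (2 * (B + 1)) * B := by
    rw [one_div, ← div_eq_inv_mul]
    have heq : (C + ε / (2 * (B + 1)) * (B * S)) / S = C / S + ε / (2 * (B + 1)) * B := by
      field_simp
    rw [← heq]
    exact (div_le_div_iff_of_pos_right hSpos).mpr hTle
  have h3 : C / S < ε / 2 := by
    rw [div_lt_iff₀ hSpos]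
    have : ε * (2 * C / ε + 1) ≤ ε * S := mul_le_mul_of_nonneg_left hSbig hε.le
    have he : ε * (2 * C / ε) = 2 * C := by field_simp
    nlinarith
  have h4 : ε / (2 * (B + 1)) * B < ε / 2 := by
    rw [div_mul_eq_mul_div, div_lt_div_iff₀ (by positivity) (by norm_num)]
    nlinarith
  linarith
end

section
/- If x is a Vilenkin-Lebesgue point of f ∈ L¹(G_m) (i.e., W_n f(x) → 0 where W_n f(x) := ∑_{s=0}^{n−1} M_s ∑_{r=1}^{m_s−1} ∫_{I_n(x − r e_s)} |f(t) − f(x)| dμ(t)) and the Fejér means satisfy σ_n f(x) → f(x), and (q_k) is non-increasing nonnegative with q_0 > 0 and Q_n → ∞, then T_n f(x) := (1/Q_n) ∑_{k=0}^{n−1} q_k S_k f(x) → f(x). -/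
open MeasureTheory Finset Filter

/-- Generalized powers: `M_0 = 1`, `M_{k+1} = m_k M_k`. -/
def Mgen (m : ℕ → ℕ) : ℕ → ℕ
  | 0 => 1
  | k + 1 => m k * Mgen m k

/-- The `k`-th digit of `n` in the generalized number system based on `m`. -/
def vDigit (m : ℕ → ℕ) (n k : ℕ) : ℕ := (n / Mgen m k) % m k

/-- The Vilenkin group: complete direct product of the cyclic groups `Z_{m_k}`. -/
abbrev VilenkinGroup (m : ℕ → ℕ) := ∀ k, ZMod (m k)

/-- The `n`-th Vilenkin character `ψ_n(x) = ∏_k exp(2πi n_k x_k / m_k)`. -/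
noncomputable def vChar (m : ℕ → ℕ) (n : ℕ) (x : VilenkinGroup m) : ℂ :=
  ∏ k ∈ Finset.range (n + 1),
    Complex.exp (2 * Real.pi * Complex.I * (vDigit m n k) * ((x k).val : ℂ) / (m k))

/-- The `n`-th Vilenkin-Dirichlet kernel `D_n = ∑_{k<n} ψ_k` (so `D_0 = 0`). -/
noncomputable def vDirichlet (m : ℕ → ℕ) (n : ℕ) (x : VilenkinGroup m) : ℂ :=
  ∑ k ∈ Finset.range n, vChar m k x

/-- Vilenkin-Fourier coefficient `f̂(j) = ∫ f conj(ψ_j) dμ`. -/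
noncomputable def vCoeff (m : ℕ → ℕ) (μ : Measure (VilenkinGroup m))
    (f : VilenkinGroup m → ℂ) (j : ℕ) : ℂ :=
  ∫ x, f x * (starRingEnd ℂ) (vChar m j x) ∂μ

/-- Partial sum `S_n f = ∑_{k<n} f̂(k) ψ_k` of the Vilenkin-Fourier series (`S_0 f = 0`). -/
noncomputable def vPartialSum (m : ℕ → ℕ) (μ : Measure (VilenkinGroup m))
    (f : VilenkinGroup m → ℂ) (n : ℕ) (x : VilenkinGroup m) : ℂ :=
  ∑ k ∈ Finset.range n, vCoeff m μ f k * vChar m k x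

/-- Fejér mean `σ_j f = (1/j) ∑_{k=1}^j S_k f`. -/
noncomputable def vFejerMean (m : ℕ → ℕ) (μ : Measure (VilenkinGroup m))
    (f : VilenkinGroup m → ℂ) (j : ℕ) (x : VilenkinGroup m) : ℂ :=
  (1 / (j : ℂ)) * ∑ k ∈ Finset.Icc 1 j, vPartialSum m μ f k x

/-- `T` mean `T_n f = (1/Q_n) ∑_{k<n} q_k S_k f`. -/
noncomputable def vTMean (m : ℕ → ℕ) (μ : Measure (VilenkinGroup m)) (q : ℕ → ℝ)
    (f : VilenkinGroup m → ℂ) (n : ℕ) (x : VilenkinGroup m) : ℂ :=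
  (1 / ((∑ k ∈ Finset.range n, q k : ℝ) : ℂ)) *
    ∑ k ∈ Finset.range n, (q k : ℂ) * vPartialSum m μ f k x
/-- The element `e_s` of the Vilenkin group with `1` in coordinate `s` and `0` elsewhere. -/
noncomputable def eVec (m : ℕ → ℕ) (s : ℕ) : VilenkinGroup m :=
  fun k => if k = s then 1 else 0

/-- The operator
`W_n f(x) = ∑_{s<n} M_s ∑_{r=1}^{m_s−1} ∫_{I_n(x − r e_s)} |f(t) − f(x)| dμ(t)`,
where `I_n(y)` is the cylinder of rank `n` around `y`. -/
noncomputable def vW (m : ℕ → ℕ) (μ : Measure (VilenkinGroup m))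
    (f : VilenkinGroup m → ℂ) (n : ℕ) (x : VilenkinGroup m) : ℝ :=
  ∑ s ∈ Finset.range n, (Mgen m s : ℝ) *
    ∑ r ∈ Finset.Icc 1 (m s - 1),
      ∫ t in {y : VilenkinGroup m | ∀ j < n, y j = (x - r • eVec m s) j},
        ‖f t - f x‖ ∂μ


/-- Toeplitz summability lemma. -/
lemma toeplitz_tendsto {b : ℕ → ℕ → ℝ} {u : ℕ → ℂ} {l : ℂ}
    (hb : ∀ n k, 0 ≤ b n k)
    (hrow : Tendsto (fun n => ∑ k ∈ Finset.range n, b n k) atTop (nhds 1))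
    (hcol : ∀ k, Tendsto (fun n => b n k) atTop (nhds 0))
    (hu : Tendsto u atTop (nhds l)) :
    Tendsto (fun n => ∑ k ∈ Finset.range n, (b n k : ℂ) * u k) atTop (nhds l) := by
  have key : ∀ n, (∑ k ∈ Finset.range n, (b n k : ℂ) * u k) - l
      = (∑ k ∈ Finset.range n, (b n k : ℂ) * (u k - l))
        + (((∑ k ∈ Finset.range n, b n k : ℝ) : ℂ) - 1) * l := by
    intro n
    push_cast
    simp only [mul_sub]
    rw [Finset.sum_sub_distrib, ← Finset.sum_mul]
    ring
  rw [Metric.tendsto_atTop]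
  intro ε hε
  set δ := ε / 6 with hδdef
  have hδpos : 0 < δ := by positivity
  obtain ⟨K, hK⟩ := Metric.tendsto_atTop.mp hu δ hδpos
  have hcolsum : Tendsto (fun n => ∑ k ∈ Finset.range K, b n k * ‖u k - l‖) atTop (nhds 0) := by
    have := tendsto_finset_sum (Finset.range K)
      (fun k _ => (hcol k).mul_const ‖u k - l‖)
    simpa using this
  obtain ⟨N1, hN1⟩ := Metric.tendsto_atTop.mp hcolsum δ hδpos
  have hmpos : (0:ℝ) < min 1 (δ / (‖l‖ + 1)) := by positivity
  obtain ⟨N2, hN2⟩ := Metric.tendsto_atTop.mp hrow _ hmpos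
  refine ⟨max (max N1 N2) K, fun n hn => ?_⟩
  have hnN1 : N1 ≤ n := le_trans (le_trans (le_max_left _ _) (le_max_left _ _)) hn
  have hnN2 : N2 ≤ n := le_trans (le_trans (le_max_right _ _) (le_max_left _ _)) hn
  have hnK : K ≤ n := le_trans (le_max_right _ _) hn
  set r := ∑ k ∈ Finset.range n, b n k with hr
  have hr1 : |r - 1| < min 1 (δ / (‖l‖ + 1)) := by
    have := hN2 n hnN2; rwa [Real.dist_eq] at this
  have hrle : r ≤ 2 := by
    have h1 : |r - 1| < 1 := lt_of_lt_of_le hr1 (min_le_left _ _)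
    have := abs_lt.mp h1
    linarith [this.2]
  -- split sum
  have hsplit : ∑ k ∈ Finset.range n, b n k * ‖u k - l‖
      = (∑ k ∈ Finset.range K, b n k * ‖u k - l‖)
        + ∑ k ∈ Finset.Ico K n, b n k * ‖u k - l‖ := by
    exact (Finset.sum_range_add_sum_Ico _ hnK).symm
  have htail : ∑ k ∈ Finset.Ico K n, b n k * ‖u k - l‖ ≤ 2 * δ := by
    calc ∑ k ∈ Finset.Ico K n, b n k * ‖u k - l‖
        ≤ ∑ k ∈ Finset.Ico K n, b n k * δ := by
          refine Finset.sum_le_sum fun k hk => ?_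
          have hk' : K ≤ k := (Finset.mem_Ico.mp hk).1
          have : ‖u k - l‖ ≤ δ := by
            have := hK k hk'; rw [dist_eq_norm] at this; exact this.le
          exact mul_le_mul_of_nonneg_left this (hb n k)
      _ = (∑ k ∈ Finset.Ico K n, b n k) * δ := by rw [Finset.sum_mul]
      _ ≤ r * δ := by
          refine mul_le_mul_of_nonneg_right ?_ hδpos.le
          refine Finset.sum_le_sum_of_subset_of_nonneg ?_ (fun k _ _ => hb n k)
          rw [Finset.range_eq_Ico]
          exact Finset.Ico_subset_Ico (Nat.zero_le _) le_rfl
      _ ≤ 2 * δ := mul_le_mul_of_nonneg_right hrle hδpos.le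
  have hhead : ∑ k ∈ Finset.range K, b n k * ‖u k - l‖ < δ := by
    have := hN1 n hnN1
    rw [Real.dist_eq] at this
    have habs : |∑ k ∈ Finset.range K, b n k * ‖u k - l‖ - 0| < δ := this
    have hnn : 0 ≤ ∑ k ∈ Finset.range K, b n k * ‖u k - l‖ :=
      Finset.sum_nonneg fun k _ => mul_nonneg (hb n k) (norm_nonneg _)
    rw [sub_zero, abs_of_nonneg hnn] at habs
    exact habs
  have hlast : |r - 1| * ‖l‖ ≤ δ := by
    have h2 : |r - 1| ≤ δ / (‖l‖ + 1) := le_of_lt (lt_of_lt_of_le hr1 (min_le_right _ _))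
    calc |r - 1| * ‖l‖ ≤ (δ / (‖l‖ + 1)) * (‖l‖ + 1) :=
          mul_le_mul h2 (by linarith [norm_nonneg l]) (norm_nonneg _) (by positivity)
      _ = δ := div_mul_cancel₀ _ (by positivity)
  have hbound : dist (∑ k ∈ Finset.range n, (b n k : ℂ) * u k) l < ε := by
    rw [dist_eq_norm, key n]
    calc ‖(∑ k ∈ Finset.range n, (b n k : ℂ) * (u k - l)) + (((r:ℝ):ℂ) - 1) * l‖
        ≤ ‖∑ k ∈ Finset.range n, (b n k : ℂ) * (u k - l)‖ + ‖(((r:ℝ):ℂ) - 1) * l‖ :=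
          norm_add_le _ _
      _ ≤ (∑ k ∈ Finset.range n, b n k * ‖u k - l‖) + |r - 1| * ‖l‖ := by
          gcongr
          · refine le_trans (norm_sum_le _ _) (le_of_eq (Finset.sum_congr rfl fun k _ => ?_))
            rw [norm_mul, Complex.norm_real, Real.norm_eq_abs, abs_of_nonneg (hb n k)]
          · rw [norm_mul]
            gcongr
            rw [show (((r:ℝ):ℂ) - 1) = (((r - 1 : ℝ)):ℂ) by push_cast; ring,
              Complex.norm_real, Real.norm_eq_abs]
      _ < δ + 2*δ + δ := by rw [hsplit]; linarith
      _ ≤ ε := by rw [hδdef]; linarith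
  exact hbound


/-- Abel summation: rewrite `∑ q_k S_k` via partial sums `A_k = ∑_{j=1}^k S_j`. -/
lemma abel_identity (q : ℕ → ℝ) (S : ℕ → ℂ) (hS0 : S 0 = 0) (n : ℕ) :
    ∑ k ∈ Finset.range n, (q k : ℂ) * S k
      = ∑ k ∈ Finset.range n,
          (((if k + 1 = n then q k else q k - q (k + 1)) : ℝ) : ℂ)
            * ∑ j ∈ Finset.Icc 1 k, S j := by
  induction n with
  | zero => simp
  | succ n ih =>
    match n, ih with
    | 0, _ => simp [hS0]
    | (m+1), ih =>
      rw [Finset.sum_range_succ, ih, Finset.sum_range_succ, Finset.sum_range_succ,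
        Finset.sum_range_succ]
      have hcongr : ∑ k ∈ Finset.range m,
            (((if k + 1 = m + 1 + 1 then q k else q k - q (k + 1)) : ℝ) : ℂ)
              * ∑ j ∈ Finset.Icc 1 k, S j
          = ∑ k ∈ Finset.range m,
            (((if k + 1 = m + 1 then q k else q k - q (k + 1)) : ℝ) : ℂ)
              * ∑ j ∈ Finset.Icc 1 k, S j := by
        refine Finset.sum_congr rfl fun k hk => ?_
        have hk' := Finset.mem_range.mp hk
        rw [if_neg (by omega), if_neg (by omega)]
      rw [hcongr]
      have hA : ∑ j ∈ Finset.Icc 1 (m+1), S j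
          = (∑ j ∈ Finset.Icc 1 m, S j) + S (m+1) := by
        rw [← Finset.sum_Icc_succ_top (Nat.one_le_iff_ne_zero.mpr (Nat.succ_ne_zero m))]
      rw [hA]
      split_ifs <;> first | (exfalso; omega) | (push_cast; ring)

/-- The weights sum: `∑_{k<n} c_{n,k} k = Q_n - q_0` for `n ≥ 1`. -/
lemma weight_sum (q : ℕ → ℝ) (n : ℕ) (hn : 1 ≤ n) :
    ∑ k ∈ Finset.range n, (if k + 1 = n then q k else q k - q (k + 1)) * (k : ℝ)
      = ∑ k ∈ Finset.range n, q k - q 0 := by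
  induction n with
  | zero => omega
  | succ n ih =>
    match n, ih with
    | 0, _ => simp
    | (m+1), ih =>
      have ih' := ih (Nat.le_add_left 1 m)
      rw [Finset.sum_range_succ] at ih'
      rw [Finset.sum_range_succ (f := q)] at ih'
      rw [Finset.sum_range_succ, Finset.sum_range_succ, Finset.sum_range_succ (f := q),
        Finset.sum_range_succ (f := q)]
      have hcongr : ∑ k ∈ Finset.range m,
            (if k + 1 = m + 1 + 1 then q k else q k - q (k + 1)) * (k : ℝ)
          = ∑ k ∈ Finset.range m,
            (if k + 1 = m + 1 then q k else q k - q (k + 1)) * (k : ℝ) := by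
        refine Finset.sum_congr rfl fun k hk => ?_
        have hk' := Finset.mem_range.mp hk
        rw [if_neg (by omega), if_neg (by omega)]
      rw [hcongr]
      split_ifs at ih' ⊢ <;> first | (exfalso; omega) | (push_cast at ih' ⊢; linarith)

lemma aux_div (c Q A k : ℂ) (hk : k ≠ 0) : (1 / Q) * (c * A) = (c * k / Q) * (1 / k * A) := by
  rcases eq_or_ne Q 0 with h | h
  · simp [h]
  · field_simp

/-- If `x` is a Vilenkin-Lebesgue point of `f ∈ L¹` (`W_n f(x) → 0`), the Fejér means
converge at `x` (`σ_n f(x) → f(x)`), and `(q_k)` is non-increasing, nonnegative with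
`q_0 > 0` and `Q_n → ∞`, then `T_n f(x) → f(x)`. -/
theorem T_mean_convergence_at_vilenkin_lebesgue_point (m : ℕ → ℕ) (hm : ∀ k, 2 ≤ m k)
    (hbdd : ∃ B, ∀ k, m k ≤ B)
    (μ : Measure (VilenkinGroup m)) [IsProbabilityMeasure μ] [μ.IsAddLeftInvariant]
    (f : VilenkinGroup m → ℂ) (hf : Integrable f μ) (x : VilenkinGroup m)
    (hW : Tendsto (fun n => vW m μ f n x) atTop (nhds 0))
    (hσ : Tendsto (fun n => vFejerMean m μ f n x) atTop (nhds (f x)))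
    (q : ℕ → ℝ) (hq : ∀ k, 0 ≤ q k) (hmono : Antitone q) (h0 : 0 < q 0)
    (hQ : Tendsto (fun n => ∑ k ∈ Finset.range n, q k) atTop atTop) :
    Tendsto (fun n => vTMean m μ q f n x) atTop (nhds (f x)) := by
  set a : ℕ → ℕ → ℝ := fun n k =>
    (if k + 1 = n then q k else q k - q (k + 1)) * k / (∑ j ∈ Finset.range n, q j) with ha
  have hcnn : ∀ n k, 0 ≤ (if k + 1 = n then q k else q k - q (k + 1)) := by
    intro n k
    split_ifs
    · exact hq k
    · exact sub_nonneg.mpr (hmono (Nat.le_succ k))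
  have hQnn : ∀ n, 0 ≤ ∑ j ∈ Finset.range n, q j :=
    fun n => Finset.sum_nonneg fun j _ => hq j
  -- the T mean as a weighted average of Fejér means
  have hT : ∀ n, vTMean m μ q f n x
      = ∑ k ∈ Finset.range n, ((a n k : ℝ) : ℂ) * vFejerMean m μ f k x := by
    intro n
    simp only [vTMean, vFejerMean, ha]
    rw [show (∑ k ∈ Finset.range n, (q k : ℂ) * vPartialSum m μ f k x)
        = ∑ k ∈ Finset.range n,
            (((if k + 1 = n then q k else q k - q (k + 1)) : ℝ) : ℂ)
              * ∑ j ∈ Finset.Icc 1 k, vPartialSum m μ f j x from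
      abel_identity q (fun k => vPartialSum m μ f k x) (by simp [vPartialSum]) n]
    rw [Finset.mul_sum]
    refine Finset.sum_congr rfl fun k _ => ?_
    rcases Nat.eq_zero_or_pos k with hk0 | hkpos
    · subst hk0; simp
    · have hk : (k : ℂ) ≠ 0 := Nat.cast_ne_zero.mpr hkpos.ne'
      rw [Complex.ofReal_div, Complex.ofReal_mul, Complex.ofReal_natCast]
      exact aux_div _ _ _ _ hk
  -- hypotheses of the Toeplitz lemma
  have hb : ∀ n k, 0 ≤ a n k := fun n k =>
    div_nonneg (mul_nonneg (hcnn n k) (Nat.cast_nonneg k)) (hQnn n)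
  have hcol : ∀ k, Tendsto (fun n => a n k) atTop (nhds 0) := by
    intro k
    have hconst : Tendsto (fun n => ((q k - q (k + 1)) * k) / ∑ j ∈ Finset.range n, q j)
        atTop (nhds 0) := Tendsto.div_atTop tendsto_const_nhds hQ
    refine hconst.congr' ?_
    filter_upwards [eventually_ge_atTop (k + 2)] with n hn
    simp only [ha]
    rw [if_neg (by omega)]
  have hrow : Tendsto (fun n => ∑ k ∈ Finset.range n, a n k) atTop (nhds 1) := by
    have h1 : Tendsto (fun n => 1 - q 0 / ∑ j ∈ Finset.range n, q j) atTop (nhds 1) := by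
      have := (Tendsto.div_atTop (tendsto_const_nhds (x := q 0)) hQ)
      have h2 := tendsto_const_nhds (x := (1:ℝ)) (f := atTop (α := ℕ)) |>.sub this
      simpa using h2
    refine h1.congr' ?_
    filter_upwards [hQ.eventually_ge_atTop 1, eventually_ge_atTop 1] with n hQn hn
    have hQne : (∑ j ∈ Finset.range n, q j) ≠ 0 := by linarith
    simp only [ha]
    rw [← Finset.sum_div, weight_sum q n hn, sub_div, div_self hQne]
  have := toeplitz_tendsto hb hrow hcol hσ
  exact this.congr fun n => (hT n).symm
end
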